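/- arXiv:1901.08606 — 3 statements merged into one kernel-verified Lean document; each statement's English description precedes it below -/
import Mathlib

section
/- For every j ∈ [n−1] and every t ≥ 0, exp(−t · e^{(p)}_{(j,j)}) = I + ((e^{−t(1 + r_j)} − 1)/(1 + r_j)) · e^{(p)}_{(j,j)}, and this matrix belongs to ⟨p⟩^+. -/
/-!
Writing `E := e^{(p)}_{(j,j)} = u vᵀ` with `u = e_j − r_j e_n` and `v = e_j − e_n`, one has
`vᵀu = 1 + r_j`, so `E² = (1 + r_j) E` and `E / (1 + r_j)` is idempotent; the exponential of a
multiple of an idempotent `P` is `1 + (eˢ − 1) P`. Since `v · 1 = 0` and `p · u = 0`, every matrix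
`1 + f E` has unit row sums and fixes `p`; it differs from `1` only in rows and columns `j, n`,
where its entries are nonnegative as soon as `−1 ≤ f (1 + r_j) ≤ 0`.
-/

open Matrix

/-- The ratio `r_j := p_j / p_n` for `j ∈ [n-1]`, with the state space `[n]` modeled as
`Fin (m+1)`, the last state `n` as `Fin.last m`, and `[n-1]` as `Fin m` via `Fin.castSucc`. -/
noncomputable def r (m : ℕ) (p : Fin (m + 1) → ℝ) (j : Fin m) : ℝ :=
  p j.castSucc / p (Fin.last m)

/-- `e^{(p)}_{(j,k)} := (e_j − r_j e_n)(e_k^T − e_n^T)` as an `(m+1) × (m+1)` real matrix. -/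
noncomputable def Ep (m : ℕ) (p : Fin (m + 1) → ℝ) (j k : Fin m) :
    Matrix (Fin (m + 1)) (Fin (m + 1)) ℝ :=
  Matrix.vecMulVec
    (fun a => (if a = j.castSucc then (1 : ℝ) else 0) -
      r m p j * (if a = Fin.last m then (1 : ℝ) else 0))
    (fun b => (if b = k.castSucc then (1 : ℝ) else 0) - (if b = Fin.last m then (1 : ℝ) else 0))

namespace NormedSpace

variable {𝔸 : Type*} [NormedRing 𝔸] [NormedAlgebra ℝ 𝔸] [CompleteSpace 𝔸]

theorem exp_smul_of_isIdempotentElem {P : 𝔸} (hP : IsIdempotentElem P) (s : ℝ) :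
    exp (s • P) = 1 + (Real.exp s - 1) • P := by
  have hA : HasSum (fun n : ℕ => ((n + 1).factorial⁻¹ : ℝ) • (s • P) ^ (n + 1))
      (exp (s • P) - 1) := by
    simpa using (hasSum_nat_add_iff' 1).mpr (exp_series_hasSum_exp' (𝕂 := ℝ) (s • P))
  have hR : HasSum (fun n : ℕ => ((n + 1).factorial⁻¹ : ℝ) * s ^ (n + 1)) (Real.exp s - 1) := by
    rw [Real.exp_eq_exp_ℝ]
    simpa using (hasSum_nat_add_iff' 1).mpr (exp_series_hasSum_exp' (𝕂 := ℝ) s)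
  have hterm (n : ℕ) : ((n + 1).factorial⁻¹ : ℝ) • (s • P) ^ (n + 1) =
      (((n + 1).factorial⁻¹ : ℝ) * s ^ (n + 1)) • P := by
    rw [smul_pow, hP.pow_succ_eq, smul_smul]
  simp only [hterm] at hA
  rw [← hA.unique (hR.smul_const P), add_sub_cancel]

theorem exp_smul_of_mul_self_eq_smul {A : 𝔸} {c : ℝ} (hc : c ≠ 0) (hA : A * A = c • A) (s : ℝ) :
    exp (s • A) = 1 + ((Real.exp (s * c) - 1) / c) • A := by
  have hP : IsIdempotentElem (c⁻¹ • A) := by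
    rw [IsIdempotentElem, smul_mul_smul_comm, hA, smul_smul, mul_assoc, inv_mul_cancel₀ hc,
      mul_one]
  have hsA : s • A = (s * c) • (c⁻¹ • A) := by rw [smul_smul, mul_inv_cancel_right₀ hc]
  rw [hsA, exp_smul_of_isIdempotentElem hP, smul_smul, div_eq_mul_inv]

end NormedSpace

section Ep

variable {m : ℕ} {p : Fin (m + 1) → ℝ}

theorem Ep_mul_Ep (j k j' k' : Fin m) :
    Ep m p j k * Ep m p j' k' = ((if k = j' then 1 else 0) + r m p j') • Ep m p j k' := by
  rw [Ep, Ep, Ep, vecMulVec_mul_vecMulVec, vecMulVec_smul]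
  congr 1
  have hne : j'.castSucc ≠ Fin.last m := (Fin.castSucc_lt_last j').ne
  simp [dotProduct, sub_mul, mul_sub, Finset.sum_sub_distrib, ite_mul, mul_ite, hne,
    (Fin.castSucc_lt_last k).ne', eq_comm]

theorem Ep_mulVec_one (j k : Fin m) : Ep m p j k *ᵥ (fun _ => 1) = 0 := by
  rw [Ep, vecMulVec_mulVec]
  simp [dotProduct, Finset.sum_sub_distrib]

theorem vecMul_Ep (hp : p (Fin.last m) ≠ 0) (j k : Fin m) : p ᵥ* Ep m p j k = 0 := by
  rw [Ep, vecMul_vecMulVec, smul_eq_zero]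
  left
  simp [dotProduct, mul_sub, Finset.sum_sub_distrib, r, mul_div_cancel₀ _ hp]

theorem one_add_smul_Ep_self_nonneg {j : Fin m} (hr : 0 ≤ r m p j) {f : ℝ} (hf : f ≤ 0)
    (hf' : -1 ≤ f * (1 + r m p j)) (a b : Fin (m + 1)) :
    0 ≤ (1 + f • Ep m p j j) a b := by
  have hne : j.castSucc ≠ Fin.last m := (Fin.castSucc_lt_last j).ne
  simp only [Ep, Matrix.add_apply, Matrix.smul_apply, one_apply, vecMulVec_apply, smul_eq_mul]
  split_ifs <;> subst_vars <;> simp_all <;> nlinarith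

end Ep

open NormedSpace in
theorem stmt9_general (m : ℕ) (p : Fin (m + 1) → ℝ)
    (hp : ∀ a, 0 < p a) (j : Fin m) (t : ℝ) (ht : 0 ≤ t) :
    exp (-(t • Ep m p j j)) =
      (1 : Matrix (Fin (m + 1)) (Fin (m + 1)) ℝ) +
        ((Real.exp (-(t * (1 + r m p j))) - 1) / (1 + r m p j)) • Ep m p j j ∧
    (∀ a b, 0 ≤ exp (-(t • Ep m p j j)) a b) ∧
    (exp (-(t • Ep m p j j))).mulVec (fun _ => (1 : ℝ)) = (fun _ => (1 : ℝ)) ∧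
    Matrix.vecMul p (exp (-(t • Ep m p j j))) = p := by
  have hr : 0 ≤ r m p j := (div_pos (hp _) (hp _)).le
  have hc : 0 < 1 + r m p j := by linarith
  have hexp : exp (-(t • Ep m p j j)) =
      1 + ((Real.exp (-(t * (1 + r m p j))) - 1) / (1 + r m p j)) • Ep m p j j := by
    -- matrices carry no global norm; any submultiplicative one gives the same `exp`
    let := Matrix.linftyOpNormedRing (n := Fin (m + 1)) (α := ℝ)
    let := Matrix.linftyOpNormedAlgebra (n := Fin (m + 1)) (R := ℝ) (α := ℝ)
    have hEE : Ep m p j j * Ep m p j j = (1 + r m p j) • Ep m p j j := by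
      simpa using Ep_mul_Ep (p := p) j j j j
    rw [← neg_smul, ← neg_mul]
    exact exp_smul_of_mul_self_eq_smul hc.ne' hEE (-t)
  have hdecay : Real.exp (-(t * (1 + r m p j))) ≤ 1 :=
    Real.exp_le_one_iff.2 (neg_nonpos.2 (mul_nonneg ht hc.le))
  rw [hexp]
  refine ⟨rfl, one_add_smul_Ep_self_nonneg hr ?_ ?_, ?_, ?_⟩
  · exact div_nonpos_of_nonpos_of_nonneg (sub_nonpos.2 hdecay) hc.le
  · rw [div_mul_cancel₀ _ hc.ne']
    linarith [Real.exp_pos (-(t * (1 + r m p j)))]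
  · rw [add_mulVec, one_mulVec, smul_mulVec, Ep_mulVec_one, smul_zero, add_zero]
  · rw [vecMul_add, vecMul_one, vecMul_smul, vecMul_Ep (hp _).ne', smul_zero, add_zero]

open NormedSpace in
/-- for `t ≥ 0`,
`exp(−t e^{(p)}_{(j,j)}) = I + ((e^{−t(1+r_j)} − 1)/(1+r_j)) e^{(p)}_{(j,j)}` and this
matrix lies in `⟨p⟩⁺`. -/
theorem stmt9 (m : ℕ) (hm : 1 ≤ m) (p : Fin (m + 1) → ℝ)
    (hp : ∀ a, 0 < p a) (hsum : ∑ a, p a = 1) (j : Fin m) (t : ℝ) (ht : 0 ≤ t) :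
    exp (-(t • Ep m p j j)) =
      (1 : Matrix (Fin (m + 1)) (Fin (m + 1)) ℝ) +
        ((Real.exp (-(t * (1 + r m p j))) - 1) / (1 + r m p j)) • Ep m p j j ∧
    (∀ a b, 0 ≤ exp (-(t • Ep m p j j)) a b) ∧
    (exp (-(t • Ep m p j j))).mulVec (fun _ => (1 : ℝ)) = (fun _ => (1 : ℝ)) ∧
    Matrix.vecMul p (exp (-(t • Ep m p j j))) = p :=
  stmt9_general m p hp j t ht
end

section
/- For every ω ≠ 0 and every t ∈ ℝ, the matrix exponential satisfies exp(t · A^{(p;ω)}_{(𝒥)}) = I + ((e^{ωt} − 1)/ω) · A^{(p;ω)}_{(𝒥)}. -/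
open Matrix

/-- For a `d`-element subset `𝒥 = {j_1, …, j_d} ⊆ [n-1]` (given as an injective tuple
`J : Fin d → Fin m`) and a `d × d` matrix `μ`, the `n × n` matrix
`μ^{(p)}_{(𝒥)} := Σ_{u,v} μ_{uv} e^{(p)}_{(j_u, j_v)}`. -/
noncomputable def liftJ (m d : ℕ) (p : Fin (m + 1) → ℝ) (J : Fin d → Fin m)
    (μ : Matrix (Fin d) (Fin d) ℝ) : Matrix (Fin (m + 1)) (Fin (m + 1)) ℝ :=
  ∑ u, ∑ v, μ u v • Ep m p (J u) (J v)

/-- The matrix `A^{(p;ω)}_{(𝒥)} := ω Σ_{u,v} (δ_{j_u j_v} − r_{j_v}/(1 + r_{(𝒥)} 1_d))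
e^{(p)}_{(j_u, j_v)}`. -/
noncomputable def AJ (m d : ℕ) (p : Fin (m + 1) → ℝ) (J : Fin d → Fin m) (ω : ℝ) :
    Matrix (Fin (m + 1)) (Fin (m + 1)) ℝ :=
  ω • ∑ u, ∑ v,
    ((if J u = J v then (1 : ℝ) else 0) - r m p (J v) / (1 + ∑ w, r m p (J w))) •
      Ep m p (J u) (J v)

/-!
Write `A = ω S` with `S = X M Y`, where the columns of `X` are the vectors `e_{j_u} − r_{j_u} e_n`
and the rows of `Y` are `e_{j_v}ᵀ − e_nᵀ`. Injectivity of `𝒥` gives `Y X = I + 1_d r_(𝒥)`, and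
by Sherman–Morrison the coefficient matrix `M = I − 1_d r_(𝒥) / (1 + r_(𝒥) 1_d)` is its inverse,
so `S² = X M (Y X) M Y = S`. For an idempotent `S` the exponential series collapses to
`exp (c S) = I + (e^c − 1) S`; take `c = ω t`.
-/

theorem IsIdempotentElem.exp_smul {𝕂 𝔸 : Type*} [RCLike 𝕂] [NormedRing 𝔸] [NormedAlgebra 𝕂 𝔸]
    [CompleteSpace 𝔸] {P : 𝔸} (hP : IsIdempotentElem P) (c : 𝕂) :
    NormedSpace.exp (c • P) = 1 + (NormedSpace.exp c - 1) • P := by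
  have hpow : ∀ n : ℕ, (c • P) ^ n = c ^ n • P + if n = 0 then 1 - P else 0 := by
    rintro (_ | n)
    · simp
    · simp [smul_pow, hP.pow_succ_eq]
  have hsum : HasSum (fun n : ℕ => (n.factorial⁻¹ : 𝕂) • (c • P) ^ n)
      (NormedSpace.exp c • P + (1 - P)) := by
    simp_rw [hpow, smul_add, smul_smul]
    refine ((NormedSpace.exp_series_hasSum_exp' (𝕂 := 𝕂) c).smul_const P).add ?_
    convert hasSum_ite_eq 0 (1 - P) using 2 with n
    split_ifs <;> simp_all
  rw [(NormedSpace.exp_series_hasSum_exp' (𝕂 := 𝕂) (c • P)).unique hsum, sub_smul, one_smul]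
  abel

theorem Matrix.exp_smul_of_isIdempotentElem {n 𝕂 : Type*} [Fintype n] [DecidableEq n]
    [RCLike 𝕂] {P : Matrix n n 𝕂} (hP : IsIdempotentElem P) (c : 𝕂) :
    NormedSpace.exp (c • P) = 1 + (NormedSpace.exp c - 1) • P :=
  open scoped Norms.Operator in hP.exp_smul c

theorem Matrix.isIdempotentElem_mul_mul {l n R : Type*} [Fintype l] [Fintype n] [DecidableEq n]
    [Semiring R] (X : Matrix l n R) (M : Matrix n n R) (Y : Matrix n l R)
    (h : M * (Y * X) = 1) : IsIdempotentElem (X * M * Y) := by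
  rw [IsIdempotentElem, show X * M * Y * (X * M * Y) = X * (M * (Y * X)) * M * Y by
    simp only [Matrix.mul_assoc], h, Matrix.mul_one]

theorem Matrix.one_sub_smul_vecMulVec_mul_one_add_vecMulVec {n K : Type*} [Fintype n]
    [DecidableEq n] [Field K] (x y : n → K) (h : 1 + y ⬝ᵥ x ≠ 0) :
    (1 - (1 + y ⬝ᵥ x)⁻¹ • vecMulVec x y) * (1 + vecMulVec x y) = 1 := by
  have hsq : vecMulVec x y + vecMulVec x y * vecMulVec x y = (1 + y ⬝ᵥ x) • vecMulVec x y := by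
    rw [vecMulVec_mul_vecMulVec, vecMulVec_smul, add_smul, one_smul]
  rw [sub_mul, one_mul, mul_add, mul_one, smul_mul_assoc, ← smul_add, hsq, smul_smul,
    inv_mul_cancel₀ h, one_smul, add_sub_cancel_right]

noncomputable def liftLeft (m d : ℕ) (p : Fin (m + 1) → ℝ) (J : Fin d → Fin m) :
    Matrix (Fin (m + 1)) (Fin d) ℝ :=
  of fun a u => (if a = (J u).castSucc then (1 : ℝ) else 0) -
    r m p (J u) * (if a = Fin.last m then (1 : ℝ) else 0)

def liftRight (m d : ℕ) (J : Fin d → Fin m) : Matrix (Fin d) (Fin (m + 1)) ℝ :=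
  of fun v b =>
    (if b = (J v).castSucc then (1 : ℝ) else 0) - (if b = Fin.last m then (1 : ℝ) else 0)

theorem liftJ_eq_mul (m d : ℕ) (p : Fin (m + 1) → ℝ) (J : Fin d → Fin m)
    (μ : Matrix (Fin d) (Fin d) ℝ) :
    liftJ m d p J μ = liftLeft m d p J * μ * liftRight m d J := by
  ext a b
  simp only [liftJ, Ep, Matrix.sum_apply, Matrix.smul_apply, vecMulVec_apply, mul_apply,
    liftLeft, liftRight, of_apply, smul_eq_mul, Finset.sum_mul]
  rw [Finset.sum_comm]
  refine Finset.sum_congr rfl fun u _ => Finset.sum_congr rfl fun v _ => ?_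
  ring

theorem liftRight_mul_liftLeft (m d : ℕ) (p : Fin (m + 1) → ℝ) {J : Fin d → Fin m}
    (hJ : Function.Injective J) :
    liftRight m d J * liftLeft m d p J = 1 + vecMulVec 1 (fun u => r m p (J u)) := by
  ext v u
  have hlast : ∀ j : Fin m, Fin.last m ≠ j.castSucc := fun j => (Fin.castSucc_lt_last j).ne'
  simp only [mul_apply, liftRight, liftLeft, of_apply, sub_mul, mul_sub, ite_mul, mul_ite,
    one_mul, mul_one, zero_mul, mul_zero, Finset.sum_sub_distrib]
  simp [Finset.sum_ite_eq', hlast, hJ.eq_iff, one_apply, eq_comm]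

theorem AJ_eq_smul_liftJ (m d : ℕ) (p : Fin (m + 1) → ℝ) {J : Fin d → Fin m}
    (hJ : Function.Injective J) (ω : ℝ) :
    AJ m d p J ω = ω • liftJ m d p J
      (1 - (1 + (fun u => r m p (J u)) ⬝ᵥ 1)⁻¹ • vecMulVec 1 (fun u => r m p (J u))) := by
  simp [AJ, liftJ, one_apply, hJ.eq_iff, dotProduct_one, div_eq_inv_mul]

open NormedSpace in
theorem stmt14_general (m d : ℕ) (p : Fin (m + 1) → ℝ) (hp : ∀ a, 0 < p a)
    (J : Fin d → Fin m) (hJ : Function.Injective J) (ω : ℝ) (hω : ω ≠ 0) (t : ℝ) :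
    exp (t • AJ m d p J ω) =
      (1 : Matrix (Fin (m + 1)) (Fin (m + 1)) ℝ) +
        ((Real.exp (ω * t) - 1) / ω) • AJ m d p J ω := by
  set ρ : Fin d → ℝ := fun u => r m p (J u)
  have hρ : 1 + ρ ⬝ᵥ 1 ≠ 0 := by
    have : 0 ≤ ρ ⬝ᵥ 1 := dotProduct_one ρ ▸
      Finset.sum_nonneg fun u _ => (div_pos (hp _) (hp _)).le
    positivity
  have hidem : IsIdempotentElem (liftJ m d p J (1 - (1 + ρ ⬝ᵥ 1)⁻¹ • vecMulVec 1 ρ)) := by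
    rw [liftJ_eq_mul]
    refine isIdempotentElem_mul_mul _ _ _ ?_
    rw [liftRight_mul_liftLeft m d p hJ]
    exact one_sub_smul_vecMulVec_mul_one_add_vecMulVec 1 ρ hρ
  rw [AJ_eq_smul_liftJ m d p hJ, smul_smul, exp_smul_of_isIdempotentElem hidem, smul_smul,
    ← Real.exp_eq_exp_ℝ, mul_comm t ω, div_mul_cancel₀ _ hω]

open NormedSpace in
/-- for `ω ≠ 0` and `t ∈ ℝ`,
`exp(t A^{(p;ω)}_{(𝒥)}) = I + ((e^{ωt} − 1)/ω) A^{(p;ω)}_{(𝒥)}`. -/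
theorem stmt14 (m d : ℕ) (hm : 1 ≤ m) (hd : 1 ≤ d) (p : Fin (m + 1) → ℝ)
    (hp : ∀ a, 0 < p a) (hsum : ∑ a, p a = 1)
    (J : Fin d → Fin m) (hJ : Function.Injective J) (ω : ℝ) (hω : ω ≠ 0) (t : ℝ) :
    exp (t • AJ m d p J ω) =
      (1 : Matrix (Fin (m + 1)) (Fin (m + 1)) ℝ) +
        ((Real.exp (ω * t) - 1) / ω) • AJ m d p J ω :=
  stmt14_general m d p hp J hJ ω hω t
end

section
/- Let F be the set of (n−1)×(n−1) real matrices τ supported on 𝒥 (τ_{jk} = 0 whenever j ∉ 𝒥 or k ∉ 𝒥) that satisfy the entrywise constraints 0 ≤ I_{n−1} − τ ≤ 1, 0 ≤ τ 1_𝒥^- ≤ 1, 0 ≤ r_𝒥^- τ ≤ 1, and 0 ≤ r_𝒥^- τ 1_𝒥^- ≤ 1. Then F is nonempty, convex, and compact, and for any vectors x, y ∈ ℝ^n the linear objective τ ↦ x^T τ^{(p)}_{(𝒥)} y attains its minimum on F at some τ* ∈ F, for which the matrix I − (τ*)^{(p)}_{(𝒥)} belongs to ⟨p⟩^+. -/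
open Matrix

/-- `1_𝒥^-`, the indicator (column) vector of `𝒥 ⊆ [n-1]` in `ℝ^{n-1}`. -/
def oneJ (m : ℕ) (𝒥 : Finset (Fin m)) : Fin m → ℝ :=
  fun j => if j ∈ 𝒥 then 1 else 0

/-- `r_𝒥^-`, the row vector in `ℝ^{n-1}` with `(r_𝒥^-)_j = r_j` for `j ∈ 𝒥`, `0` otherwise. -/
noncomputable def rJ (m : ℕ) (p : Fin (m + 1) → ℝ) (𝒥 : Finset (Fin m)) : Fin m → ℝ :=
  fun j => if j ∈ 𝒥 then r m p j else 0

/-- The block matrix `τ^{(p)}_{(𝒥)}`: upper-left `(n-1) × (n-1)` block `τ`, first `n-1`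
entries of the last column `−τ 1_𝒥^-`, first `n-1` entries of the last row `−r_𝒥^- τ`,
and `(n,n)` entry `r_𝒥^- τ 1_𝒥^-`. -/
noncomputable def tauExt (m : ℕ) (p : Fin (m + 1) → ℝ) (𝒥 : Finset (Fin m))
    (τ : Matrix (Fin m) (Fin m) ℝ) : Matrix (Fin (m + 1)) (Fin (m + 1)) ℝ :=
  Matrix.of fun a b =>
    Fin.lastCases
      (Fin.lastCases (dotProduct (rJ m p 𝒥) (τ.mulVec (oneJ m 𝒥)))
        (fun b' => -(Matrix.vecMul (rJ m p 𝒥) τ b')) b)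
      (fun a' => Fin.lastCases (-(τ.mulVec (oneJ m 𝒥) a')) (fun b' => τ a' b') b) a

/-- The feasible set `F` of the linear program: `(n−1) × (n−1)` matrices `τ` supported on
`𝒥` satisfying `0 ≤ I_{n−1} − τ ≤ 1` (entrywise), `0 ≤ τ 1_𝒥^- ≤ 1`, `0 ≤ r_𝒥^- τ ≤ 1`
(componentwise), and `0 ≤ r_𝒥^- τ 1_𝒥^- ≤ 1`. -/
noncomputable def feasible (m : ℕ) (p : Fin (m + 1) → ℝ) (𝒥 : Finset (Fin m)) :
    Set (Matrix (Fin m) (Fin m) ℝ) :=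
  {τ | (∀ j k : Fin m, (j ∉ 𝒥 ∨ k ∉ 𝒥) → τ j k = 0) ∧
    (∀ j k : Fin m, 0 ≤ ((1 : Matrix (Fin m) (Fin m) ℝ) - τ) j k ∧
      ((1 : Matrix (Fin m) (Fin m) ℝ) - τ) j k ≤ 1) ∧
    (∀ j : Fin m, 0 ≤ τ.mulVec (oneJ m 𝒥) j ∧ τ.mulVec (oneJ m 𝒥) j ≤ 1) ∧
    (∀ k : Fin m, 0 ≤ Matrix.vecMul (rJ m p 𝒥) τ k ∧ Matrix.vecMul (rJ m p 𝒥) τ k ≤ 1) ∧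
    (0 ≤ dotProduct (rJ m p 𝒥) (τ.mulVec (oneJ m 𝒥)) ∧
      dotProduct (rJ m p 𝒥) (τ.mulVec (oneJ m 𝒥)) ≤ 1)}

/-! The constraints defining `F` say exactly that `τ` is supported on `𝒥` and that every entry
of `I − τ^{(p)}_{(𝒥)}` lies in `[0, 1]`. As `τ ↦ τ^{(p)}_{(𝒥)}` is linear, `F` is a subspace
intersected with the preimage of a closed convex box under an affine map, hence closed and
convex; it is bounded since `τ = I − (I − τ)`, and it contains `0`, so the continuous objective
attains its minimum on it. For `τ` supported on `𝒥` the row sums of `τ^{(p)}_{(𝒥)}` vanish, and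
since `p_n r_j = p_j` so do its `p`-weighted column sums; hence `I − τ^{(p)}_{(𝒥)} ∈ ⟨p⟩⁺` for
every `τ ∈ F`. -/

section

variable {ι : Type*}

def supportedOn (𝒥 : Finset ι) : Submodule ℝ (Matrix ι ι ℝ) where
  carrier := {τ | ∀ j k, (j ∉ 𝒥 ∨ k ∉ 𝒥) → τ j k = 0}
  add_mem' hσ hτ j k h := by simp [hσ j k h, hτ j k h]
  zero_mem' _ _ _ := rfl
  smul_mem' c τ hτ j k h := by simp [hτ j k h]

lemma mem_supportedOn {𝒥 : Finset ι} {τ : Matrix ι ι ℝ} :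
    τ ∈ supportedOn 𝒥 ↔ ∀ j k, (j ∉ 𝒥 ∨ k ∉ 𝒥) → τ j k = 0 :=
  Iff.rfl

variable (ι) in
def unitBox : Set (Matrix ι ι ℝ) :=
  {M | ∀ a b, M a b ∈ Set.Icc 0 1}

lemma convex_unitBox : Convex ℝ (unitBox ι) :=
  fun _ hM _ hN _ _ hs ht hst a b => convex_Icc 0 1 (hM a b) (hN a b) hs ht hst

lemma one_mem_unitBox [DecidableEq ι] : (1 : Matrix ι ι ℝ) ∈ unitBox ι := by
  intro a b
  rw [one_apply]
  split_ifs <;> simp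

lemma isClosed_unitBox : IsClosed (unitBox ι) := by
  simp only [unitBox, Set.ofPred_forall]
  exact isClosed_iInter fun a => isClosed_iInter fun b =>
    isClosed_Icc.preimage (continuous_apply_apply a b)

end

section

variable {m : ℕ} {p : Fin (m + 1) → ℝ} {𝒥 : Finset (Fin m)} {τ : Matrix (Fin m) (Fin m) ℝ}

@[simp]
lemma tauExt_castSucc_castSucc (j k : Fin m) :
    tauExt m p 𝒥 τ j.castSucc k.castSucc = τ j k := by
  simp [tauExt]

@[simp]
lemma tauExt_castSucc_last (j : Fin m) :
    tauExt m p 𝒥 τ j.castSucc (Fin.last m) = -(τ *ᵥ oneJ m 𝒥) j := by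
  simp [tauExt]

@[simp]
lemma tauExt_last_castSucc (k : Fin m) :
    tauExt m p 𝒥 τ (Fin.last m) k.castSucc = -(rJ m p 𝒥 ᵥ* τ) k := by
  simp [tauExt]

@[simp]
lemma tauExt_last_last :
    tauExt m p 𝒥 τ (Fin.last m) (Fin.last m) = rJ m p 𝒥 ⬝ᵥ (τ *ᵥ oneJ m 𝒥) := by
  simp [tauExt]

variable (m p 𝒥) in
noncomputable def tauExtLinearMap :
    Matrix (Fin m) (Fin m) ℝ →ₗ[ℝ] Matrix (Fin (m + 1)) (Fin (m + 1)) ℝ where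
  toFun := tauExt m p 𝒥
  map_add' σ τ := by
    ext a b
    induction a using Fin.lastCases <;> induction b using Fin.lastCases <;>
      simp [add_mulVec, vecMul_add] <;> ring
  map_smul' c τ := by
    ext a b
    induction a using Fin.lastCases <;> induction b using Fin.lastCases <;>
      simp [smul_mulVec, vecMul_smul]

lemma continuous_tauExt : Continuous (tauExt m p 𝒥) :=
  (tauExtLinearMap m p 𝒥).continuous_of_finiteDimensional

lemma feasible_eq :
    feasible m p 𝒥 =
      (supportedOn 𝒥 : Set _) ∩ (fun τ => 1 - tauExt m p 𝒥 τ) ⁻¹' unitBox (Fin (m + 1)) := by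
  ext τ
  simp only [feasible, unitBox, mem_supportedOn, Fin.forall_fin_succ', Set.mem_ofPred_eq,
    Set.mem_inter_iff, SetLike.mem_coe, Set.mem_preimage, Set.mem_Icc, Matrix.sub_apply,
    tauExt_castSucc_castSucc, tauExt_castSucc_last, tauExt_last_castSucc, tauExt_last_last,
    one_apply, Fin.castSucc_inj, Fin.castSucc_ne_last, (Fin.castSucc_ne_last _).symm, if_true,
    if_false, zero_sub, neg_neg, sub_nonneg, sub_le_self_iff, forall_and]
  tauto

lemma isClosed_feasible : IsClosed (feasible m p 𝒥) := by
  rw [feasible_eq]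
  exact (supportedOn 𝒥).closed_of_finiteDimensional.inter
    (isClosed_unitBox.preimage (continuous_const.sub continuous_tauExt))

lemma convex_feasible : Convex ℝ (feasible m p 𝒥) := by
  rw [feasible_eq]
  exact (supportedOn 𝒥).convex.inter
    (convex_unitBox.affine_preimage (AffineMap.const ℝ _ 1 - (tauExtLinearMap m p 𝒥).toAffineMap))

lemma zero_mem_feasible : (0 : Matrix (Fin m) (Fin m) ℝ) ∈ feasible m p 𝒥 := by
  rw [feasible_eq]
  refine ⟨(supportedOn 𝒥).zero_mem, ?_⟩
  change 1 - tauExtLinearMap m p 𝒥 0 ∈ unitBox _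
  simpa using one_mem_unitBox

lemma isCompact_feasible : IsCompact (feasible m p 𝒥) := by
  refine (isCompact_univ_pi fun _ => isCompact_univ_pi fun _ => isCompact_Icc (a := -1) (b := 1)
    ).of_isClosed_subset isClosed_feasible fun (τ : Matrix _ _ ℝ) hτ j _ k _ => ?_
  obtain ⟨h₀, h₁⟩ := hτ.2.1 j k
  obtain ⟨i₀, i₁⟩ := one_mem_unitBox j k
  rw [Matrix.sub_apply] at h₀ h₁
  constructor <;> linarith

lemma mulVec_oneJ (hτ : τ ∈ supportedOn 𝒥) : τ *ᵥ oneJ m 𝒥 = τ *ᵥ 1 := by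
  ext j
  simp only [mulVec, dotProduct]
  refine Finset.sum_congr rfl fun k _ => ?_
  by_cases hk : k ∈ 𝒥
  · simp [oneJ, hk]
  · simp [oneJ, hk, hτ j k (Or.inr hk)]

lemma smul_rJ_vecMul (hp : p (Fin.last m) ≠ 0) (hτ : τ ∈ supportedOn 𝒥) :
    p (Fin.last m) • (rJ m p 𝒥 ᵥ* τ) = (fun j => p j.castSucc) ᵥ* τ := by
  ext k
  simp only [Pi.smul_apply, vecMul, dotProduct, smul_eq_mul, Finset.mul_sum]
  refine Finset.sum_congr rfl fun j _ => ?_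
  by_cases hj : j ∈ 𝒥
  · simp only [rJ, r, hj, if_true]
    field_simp
  · simp [hτ j k (Or.inl hj)]

lemma tauExt_mulVec_one (hτ : τ ∈ supportedOn 𝒥) : tauExt m p 𝒥 τ *ᵥ 1 = 0 := by
  ext a
  induction a using Fin.lastCases with
  | last =>
    rw [Pi.zero_apply, mulVec, dotProduct_one, Fin.sum_univ_castSucc]
    simp only [tauExt_last_castSucc, tauExt_last_last, mulVec_oneJ hτ, dotProduct_mulVec,
      dotProduct_one, Finset.sum_neg_distrib, neg_add_cancel]
  | cast j =>
    rw [Pi.zero_apply, mulVec, dotProduct_one, Fin.sum_univ_castSucc]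
    simp only [tauExt_castSucc_castSucc, tauExt_castSucc_last, mulVec_oneJ hτ]
    simp [mulVec, dotProduct_one]

lemma vecMul_tauExt (hp : p (Fin.last m) ≠ 0) (hτ : τ ∈ supportedOn 𝒥) :
    p ᵥ* tauExt m p 𝒥 τ = 0 := by
  have key := smul_rJ_vecMul hp hτ
  ext b
  induction b using Fin.lastCases with
  | last =>
    have h : p (Fin.last m) * (rJ m p 𝒥 ⬝ᵥ τ *ᵥ oneJ m 𝒥)
        = (fun j => p j.castSucc) ⬝ᵥ τ *ᵥ oneJ m 𝒥 := by
      rw [dotProduct_mulVec, dotProduct_mulVec, ← key, smul_dotProduct, smul_eq_mul]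
    rw [Pi.zero_apply, vecMul, dotProduct, Fin.sum_univ_castSucc]
    simp only [tauExt_castSucc_last, tauExt_last_last, h, mul_neg, Finset.sum_neg_distrib]
    exact neg_add_cancel _
  | cast k =>
    have h := congrFun key k
    simp only [vecMul, dotProduct, Fin.sum_univ_castSucc, tauExt_castSucc_castSucc,
      tauExt_last_castSucc, Pi.smul_apply, smul_eq_mul, Pi.zero_apply] at h ⊢
    rw [← h]
    ring

end

theorem stmt19_general (m : ℕ) (p : Fin (m + 1) → ℝ)
    (hp : ∀ a, 0 < p a) (𝒥 : Finset (Fin m)) :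
    (feasible m p 𝒥).Nonempty ∧
    Convex ℝ (feasible m p 𝒥) ∧
    IsCompact (feasible m p 𝒥) ∧
    ∀ x y : Fin (m + 1) → ℝ,
      ∃ τs ∈ feasible m p 𝒥,
        (∀ τ ∈ feasible m p 𝒥,
          dotProduct x ((tauExt m p 𝒥 τs).mulVec y) ≤
            dotProduct x ((tauExt m p 𝒥 τ).mulVec y)) ∧
        (∀ a b, 0 ≤ ((1 : Matrix (Fin (m + 1)) (Fin (m + 1)) ℝ) - tauExt m p 𝒥 τs) a b) ∧
        ((1 : Matrix (Fin (m + 1)) (Fin (m + 1)) ℝ) - tauExt m p 𝒥 τs).mulVec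
          (fun _ => (1 : ℝ)) = (fun _ => (1 : ℝ)) ∧
        Matrix.vecMul p ((1 : Matrix (Fin (m + 1)) (Fin (m + 1)) ℝ) - tauExt m p 𝒥 τs) = p := by
  refine ⟨⟨0, zero_mem_feasible⟩, convex_feasible, isCompact_feasible, fun x y => ?_⟩
  have hobj : Continuous fun τ => x ⬝ᵥ tauExt m p 𝒥 τ *ᵥ y :=
    continuous_const.dotProduct (continuous_tauExt.matrix_mulVec continuous_const)
  obtain ⟨τs, hτs, hmin⟩ :=
    isCompact_feasible.exists_isMinOn ⟨0, zero_mem_feasible⟩ hobj.continuousOn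
  obtain ⟨hsupp, hbox⟩ : τs ∈ supportedOn 𝒥 ∧ 1 - tauExt m p 𝒥 τs ∈ unitBox _ := by
    rwa [feasible_eq] at hτs
  refine ⟨τs, hτs, fun τ hτ => hmin hτ, fun a b => (hbox a b).1, ?_, ?_⟩
  · change _ *ᵥ 1 = 1
    rw [sub_mulVec, one_mulVec, tauExt_mulVec_one hsupp, sub_zero]
  · rw [vecMul_sub, vecMul_one, vecMul_tauExt (hp _).ne' hsupp, sub_zero]

/-- the feasible set `F` is nonempty, convex, and compact, and for any
`x, y ∈ ℝ^n` the linear objective `τ ↦ x^T τ^{(p)}_{(𝒥)} y` attains its minimum on `F`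
at some `τ* ∈ F`, for which `I − (τ*)^{(p)}_{(𝒥)} ∈ ⟨p⟩⁺`. -/
theorem stmt19 (m : ℕ) (hm : 1 ≤ m) (p : Fin (m + 1) → ℝ)
    (hp : ∀ a, 0 < p a) (hsum : ∑ a, p a = 1) (𝒥 : Finset (Fin m)) :
    (feasible m p 𝒥).Nonempty ∧
    Convex ℝ (feasible m p 𝒥) ∧
    IsCompact (feasible m p 𝒥) ∧
    ∀ x y : Fin (m + 1) → ℝ,
      ∃ τs ∈ feasible m p 𝒥,
        (∀ τ ∈ feasible m p 𝒥,
          dotProduct x ((tauExt m p 𝒥 τs).mulVec y) ≤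
            dotProduct x ((tauExt m p 𝒥 τ).mulVec y)) ∧
        (∀ a b, 0 ≤ ((1 : Matrix (Fin (m + 1)) (Fin (m + 1)) ℝ) - tauExt m p 𝒥 τs) a b) ∧
        ((1 : Matrix (Fin (m + 1)) (Fin (m + 1)) ℝ) - tauExt m p 𝒥 τs).mulVec
          (fun _ => (1 : ℝ)) = (fun _ => (1 : ℝ)) ∧
        Matrix.vecMul p ((1 : Matrix (Fin (m + 1)) (Fin (m + 1)) ℝ) - tauExt m p 𝒥 τs) = p :=
  stmt19_general m p hp 𝒥
end
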